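/- arXiv:1606.05235 — 2 statements merged into one kernel-verified Lean document; each statement's English description precedes it below -/
import Mathlib

section
/- Let C_0 = {(log|z_1|,…,log|z_n|) : |z_1|² + ⋯ + |z_n|² < 1} ⊂ ℝⁿ and let f, g be convex functions on C_0 increasing in each variable with f = g = 0 on ∂C_0. If lim_{c→+∞} P_{C_0}(f, g+c) = f holds everywhere on C_0, then for each a ∈ C_0 and each b ∈ ℕⁿ with strictly positive entries, lim_{t→−∞} f(a+tb)/t ≥ lim_{t→−∞} g(a+tb)/t. -/
open Filter MeasureTheory Metric Set
open scoped ENNReal Topology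

noncomputable section

/-- The logarithmic image of the unit ball:
`C₀ = {(log|z₁|,…,log|zₙ|) : Σ|zᵢ|² < 1} = {x : Σ e^{2xᵢ} < 1}`. -/
def C0 (n : ℕ) : Set (Fin n → ℝ) := {x | ∑ i, Real.exp (2 * x i) < 1}

/-- The convex envelope `P_{C₀}(f, g+c)(x)`: the supremum at `x` of all convex functions on
`C₀` lying below `min(f, g+c)` on `C₀`. -/
def convEnv (n : ℕ) (f g : (Fin n → ℝ) → ℝ) (c : ℝ) (x : Fin n → ℝ) : EReal :=
  ⨆ (u : (Fin n → ℝ) → ℝ) (_ : ConvexOn ℝ (C0 n) u ∧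
      ∀ y ∈ C0 n, u y ≤ min (f y) (g y + c)), ((u x : ℝ) : EReal)

/-- The slope at infinity of `h` along the ray `t ↦ a + t b`, `t → -∞`
(for convex `h` the `limsup` is an honest limit). -/
def raySlope (n : ℕ) (h : (Fin n → ℝ) → ℝ) (a b : Fin n → ℝ) : EReal :=
  Filter.limsup (fun t : ℝ => ((h (a + t • b) / t : ℝ) : EReal)) atBot

/-!
Let `m` be below the slope of `g` along the ray, so `g(a + tb) < m t` for arbitrarily negative `t`.
Every competitor `u` in the envelope `P(f, g + c)` is convex, below `g + c` on the ray and below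
`f(a)` at `a`; convexity along the ray then forces `u(a + t₀b) ≤ m t₀ + f(a)` whatever `c` is.
Letting `c → ∞` gives `f(a + t₀b) ≤ m t₀ + f(a)`, so the slope of `f` is at least `m`.
-/

section SlopeAtBot

variable {φ : ℝ → ℝ} {m : ℝ}

lemma frequently_lt_mul_of_lt_limsup_div
    (h : (m : EReal) < limsup (fun t : ℝ => ((φ t / t : ℝ) : EReal)) atBot) :
    ∃ᶠ t in atBot, φ t < m * t := by
  have hfreq : ∃ᶠ t in atBot, (m : EReal) < ((φ t / t : ℝ) : EReal) :=
    frequently_lt_of_lt_limsup (by isBoundedDefault) h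
  refine (hfreq.and_eventually (eventually_lt_atBot 0)).mono fun t ⟨hlt, ht⟩ => ?_
  exact (lt_div_iff_of_neg ht).1 (EReal.coe_lt_coe_iff.1 hlt)

lemma le_limsup_div_of_eventually_le {K : ℝ} (h : ∀ᶠ t in atBot, φ t ≤ m * t + K) :
    (m : EReal) ≤ limsup (fun t : ℝ => ((φ t / t : ℝ) : EReal)) atBot := by
  have hlim : Tendsto (fun t : ℝ => ((m + K / t : ℝ) : EReal)) atBot (𝓝 (m : EReal)) := by
    refine EReal.tendsto_coe.2 ?_
    simpa using tendsto_const_nhds.add (tendsto_const_nhds.div_atBot (tendsto_id (α := ℝ)))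
  rw [← hlim.limsup_eq]
  refine limsup_le_limsup ?_
  filter_upwards [h, eventually_lt_atBot 0] with t hφ ht
  rw [EReal.coe_le_coe_iff, le_div_iff_of_neg ht, add_mul, div_mul_cancel₀ _ ht.ne]
  exact hφ

end SlopeAtBot

/-- Write `a + t₀ v` as a convex combination of `a` and a far point `a + t v` where `g < m t`;
the weight `t₀ / t` of the far point tends to `0`. -/
lemma ConvexOn.le_mul_add_of_frequently_lt {E : Type*} [AddCommGroup E] [Module ℝ E]
    {s : Set E} {u g : E → ℝ} {a v : E} {m c t₀ : ℝ} (hu : ConvexOn ℝ s u)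
    (hray : ∀ t : ℝ, t ≤ 0 → a + t • v ∈ s)
    (hug : ∀ t : ℝ, t ≤ 0 → u (a + t • v) ≤ g (a + t • v) + c)
    (hg : ∃ᶠ t in atBot, g (a + t • v) < m * t) (ht₀ : t₀ < 0) :
    u (a + t₀ • v) ≤ m * t₀ + u a := by
  have hlim : Tendsto (fun t => m * t₀ + u a + t₀ / t * (c - u a)) atBot
      (𝓝 (m * t₀ + u a)) := by
    simpa using tendsto_const_nhds.add
      ((tendsto_const_nhds.div_atBot (tendsto_id (α := ℝ))).mul_const (c - u a))
  refine ge_of_tendsto_of_frequently hlim ((hg.and_eventually (eventually_lt_atBot t₀)).mono ?_)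
  rintro t ⟨hgt, htt₀⟩
  have ht : t < 0 := htt₀.trans ht₀
  set w := t₀ / t
  have hw0 : 0 < w := div_pos_of_neg_of_neg ht₀ ht
  have hw1 : w < 1 := (div_lt_one_of_neg ht).2 htt₀
  have hwt : w * t = t₀ := div_mul_cancel₀ _ ht.ne
  have hcomb : w • (a + t • v) + (1 - w) • a = a + t₀ • v := by
    rw [← hwt]; module
  have hconv := hu.2 (hray t ht.le) (hray 0 le_rfl) hw0.le (sub_nonneg.2 hw1.le) (by ring)
  rw [zero_smul, add_zero, hcomb, smul_eq_mul, smul_eq_mul] at hconv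
  calc u (a + t₀ • v) ≤ w * u (a + t • v) + (1 - w) * u a := hconv
    _ ≤ w * (m * t + c) + (1 - w) * u a := by gcongr; linarith [hug t ht.le]
    _ = m * t₀ + u a + w * (c - u a) := by rw [← hwt]; ring

lemma isLowerSet_C0 (n : ℕ) : IsLowerSet (C0 n) := fun y x hxy hy =>
  lt_of_le_of_lt (Finset.sum_le_sum fun i _ => Real.exp_le_exp.2 (by linarith [hxy i])) hy

lemma convEnv_le {n : ℕ} {f g : (Fin n → ℝ) → ℝ} {c B : ℝ} {x : Fin n → ℝ}
    (h : ∀ u, ConvexOn ℝ (C0 n) u → (∀ y ∈ C0 n, u y ≤ min (f y) (g y + c)) → u x ≤ B) :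
    convEnv n f g c x ≤ B :=
  iSup₂_le fun u ⟨hu, hle⟩ => EReal.coe_le_coe_iff.2 (h u hu hle)

theorem raySlope_of_convEnv_tendsto_general (n : ℕ) (f g : (Fin n → ℝ) → ℝ)
    (hconv : ∀ x ∈ C0 n,
      Tendsto (fun c : ℝ => convEnv n f g c x) atTop (𝓝 ((f x : ℝ) : EReal))) :
    ∀ a ∈ C0 n, ∀ b : Fin n → ℕ, (∀ i, 0 < b i) →
      raySlope n g a (fun i => (b i : ℝ)) ≤ raySlope n f a (fun i => (b i : ℝ)) := by
  intro a ha b _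
  set v : Fin n → ℝ := fun i => (b i : ℝ)
  have hray : ∀ t : ℝ, t ≤ 0 → a + t • v ∈ C0 n := fun t ht =>
    isLowerSet_C0 n (add_le_of_nonpos_right (smul_nonpos_of_nonpos_of_nonneg ht
      fun i => Nat.cast_nonneg (b i))) ha
  refine EReal.ge_of_forall_gt_iff_ge.1 fun m hm => le_limsup_div_of_eventually_le (K := f a) ?_
  have hg := frequently_lt_mul_of_lt_limsup_div hm
  filter_upwards [eventually_lt_atBot 0] with t ht
  have hbound (c : ℝ) : convEnv n f g c (a + t • v) ≤ ((m * t + f a : ℝ) : EReal) :=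
    convEnv_le fun u hu hle => by
      have hua : u a ≤ f a := (hle a ha).trans (min_le_left _ _)
      have hu_ray := hu.le_mul_add_of_frequently_lt hray
        (fun s hs => (hle _ (hray s hs)).trans (min_le_right _ _)) hg ht
      linarith
  exact EReal.coe_le_coe_iff.1 (le_of_tendsto' (hconv _ (hray t ht.le)) hbound)

/-- Let `f, g` be convex functions on `C₀` increasing in each variable with
boundary values `0`.  If `lim_{c→∞} P_{C₀}(f,g+c) = f` everywhere on `C₀`, then
`lim_{t→-∞} f(a+tb)/t ≥ lim_{t→-∞} g(a+tb)/t` for all `a ∈ C₀`, `b ∈ ℕⁿ` with positive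
entries. -/
theorem raySlope_of_convEnv_tendsto (n : ℕ) (f g : (Fin n → ℝ) → ℝ)
    (hfconv : ConvexOn ℝ (C0 n) f) (hgconv : ConvexOn ℝ (C0 n) g)
    (hfmono : ∀ x ∈ C0 n, ∀ y ∈ C0 n, (∀ i, x i ≤ y i) → f x ≤ f y)
    (hgmono : ∀ x ∈ C0 n, ∀ y ∈ C0 n, (∀ i, x i ≤ y i) → g x ≤ g y)
    (hfbd : ∀ x ∈ frontier (C0 n), Tendsto f (𝓝[C0 n] x) (𝓝 (0 : ℝ)))
    (hgbd : ∀ x ∈ frontier (C0 n), Tendsto g (𝓝[C0 n] x) (𝓝 (0 : ℝ)))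
    (hconv : ∀ x ∈ C0 n,
      Tendsto (fun c : ℝ => convEnv n f g c x) atTop (𝓝 ((f x : ℝ) : EReal))) :
    ∀ a ∈ C0 n, ∀ b : Fin n → ℕ, (∀ i, 0 < b i) →
      raySlope n g a (fun i => (b i : ℝ)) ≤ raySlope n f a (fun i => (b i : ℝ)) :=
  raySlope_of_convEnv_tendsto_general n f g hconv
end
end

section
/- Let f and g be negative convex increasing functions on ℝ_{<0}. If lim_{t→−∞} f(t)/t ≥ lim_{t→−∞} g(t)/t, then for every ε > 0 there exists C > 0 such that f(t) + εt ≤ P(f, g+C)(t) for all t < 0; consequently lim_{c→+∞} P(f, g+c) = f pointwise on ℝ_{<0}. -/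
/-!
Both `f t / t` and `g t / t` converge as `t → -∞` (the secant slopes of a convex increasing
function are monotone and nonnegative), so when the slope of `f` is at least that of `g`, the
convex function `f t + ε t` lies below `g` on some `(-∞, T]`. On `[T, 0)` it is negative while
`g + C ≥ g T + C ≥ 0` for large `C`, hence it is a competitor in `P(f, g + C)`. Letting `ε → 0` and using
that `P(f, g + c) ≤ f` increases with `c` gives the pointwise limit.
-/

open Filter MeasureTheory Metric Set
open scoped ENNReal Topology

noncomputable section

/-- The convex envelope `P(f, g+c)(t)`: the supremum at `t` of all convex functions on
`ℝ_{<0}` lying below `min(f, g+c)` there. -/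
def convEnv1 (f g : ℝ → ℝ) (c : ℝ) (t : ℝ) : EReal :=
  ⨆ (u : ℝ → ℝ) (_ : ConvexOn ℝ (Iio (0:ℝ)) u ∧
      ∀ s ∈ Iio (0:ℝ), u s ≤ min (f s) (g s + c)), ((u t : ℝ) : EReal)

/-- The slope at infinity `lim_{t→-∞} h(t)/t`, as a `limsup` in `EReal` (for convex
increasing `h` the limit exists in `[0,+∞]`). -/
def slopeAtBot (h : ℝ → ℝ) : EReal :=
  Filter.limsup (fun t : ℝ => ((h t / t : ℝ) : EReal)) atBot

theorem MonotoneOn.exists_tendsto_atBot {α β : Type*} [LinearOrder α]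
    [ConditionallyCompleteLinearOrder β] [TopologicalSpace β] [OrderTopology β] {f : α → β}
    {b : α} (hf : MonotoneOn f (Iic b)) (hbdd : BddBelow (f '' Iic b)) :
    ∃ ℓ, Tendsto f atBot (𝓝 ℓ) := by
  have hmono : Monotone fun t => f (min t b) := fun x y hxy =>
    hf (min_le_right x b) (min_le_right y b) (min_le_min_right b hxy)
  have hbdd' : BddBelow (range fun t => f (min t b)) :=
    hbdd.mono <| range_subset_iff.2 fun t => mem_image_of_mem f (min_le_right t b)
  refine ⟨_, (tendsto_atBot_ciInf hmono hbdd').congr' ?_⟩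
  filter_upwards [eventually_le_atBot b] with t ht
  rw [min_eq_left ht]

theorem ConvexOn.exists_tendsto_div_atBot {h : ℝ → ℝ} (hconv : ConvexOn ℝ (Iio 0) h)
    (hmono : MonotoneOn h (Iio 0)) : ∃ ℓ : ℝ, Tendsto (fun t => h t / t) atBot (𝓝 ℓ) := by
  set φ : ℝ → ℝ := fun t => (h (-1) - h t) / (-1 - t)
  have hφmono : MonotoneOn φ (Iic (-2)) := fun x hx y hy hxy => by
    rcases hxy.eq_or_lt with rfl | hlt
    · rfl
    have hy' : y < -1 := by simp only [mem_Iic] at hy; linarith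
    exact hconv.secant_mono_aux3 (by simp only [mem_Iio]; linarith) (by norm_num) hlt hy'
  have hφnonneg : ∀ t ∈ Iic (-2 : ℝ), 0 ≤ φ t := fun t ht => by
    simp only [mem_Iic] at ht
    exact div_nonneg (sub_nonneg.2 <| hmono (by simp only [mem_Iio]; linarith) (by norm_num)
      (by linarith)) (by linarith)
  obtain ⟨ℓ, hφ⟩ := hφmono.exists_tendsto_atBot ⟨0, forall_mem_image.2 hφnonneg⟩
  refine ⟨ℓ, ?_⟩
  -- `h t = h (-1) + φ t * (t + 1)`
  have hlim : Tendsto (fun t : ℝ => φ t * (1 + t⁻¹) + h (-1) * t⁻¹) atBot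
      (𝓝 (ℓ * (1 + 0) + h (-1) * 0)) :=
    (hφ.mul (tendsto_inv_atBot_zero.const_add 1)).add (tendsto_inv_atBot_zero.const_mul _)
  rw [mul_zero, add_zero, add_zero, mul_one] at hlim
  refine hlim.congr' ?_
  filter_upwards [eventually_le_atBot (-2 : ℝ)] with t ht
  have ht₀ : t ≠ 0 := by linarith
  have ht₁ : -1 - t ≠ 0 := by linarith
  simp only [φ]
  field_simp
  ring

theorem slopeAtBot_eq_of_tendsto {h : ℝ → ℝ} {ℓ : ℝ}
    (hh : Tendsto (fun t => h t / t) atBot (𝓝 ℓ)) : slopeAtBot h = ℓ :=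
  ((continuous_coe_real_ereal.tendsto ℓ).comp hh).limsup_eq

theorem eventually_add_mul_lt_of_tendsto_div {f g : ℝ → ℝ} {lf lg ε : ℝ}
    (hf : Tendsto (fun t => f t / t) atBot (𝓝 lf)) (hg : Tendsto (fun t => g t / t) atBot (𝓝 lg))
    (hle : lg ≤ lf) (hε : 0 < ε) : ∀ᶠ t in atBot, f t + ε * t < g t := by
  have hpos : ∀ᶠ t in atBot, 0 < f t / t + ε - g t / t :=
    ((hf.add_const ε).sub hg).eventually (eventually_gt_nhds (by linarith))
  filter_upwards [hpos, eventually_lt_atBot 0] with t hpos ht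
  have : (f t / t + ε - g t / t) * t = f t + ε * t - g t := by field_simp [ht.ne]
  nlinarith

theorem exists_le_add_of_eventually_le {u g : ℝ → ℝ} (hg : MonotoneOn g (Iio 0))
    (hu : ∀ t < 0, u t ≤ 0) (hev : ∀ᶠ t in atBot, u t ≤ g t) :
    ∃ C > 0, ∀ t < 0, u t ≤ g t + C := by
  obtain ⟨T₀, hT₀⟩ := eventually_atBot.1 hev
  set T := min T₀ (-1)
  have hT : T < 0 := (min_le_right _ _).trans_lt (by norm_num)
  refine ⟨max 1 (-g T), lt_max_of_lt_left one_pos, fun t ht => ?_⟩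
  rcases le_or_gt t T with htT | htT
  · linarith [hT₀ t (htT.trans (min_le_left _ _)), le_max_left 1 (-g T)]
  · linarith [hu t ht, hg hT ht htT.le, le_max_right 1 (-g T)]

section convEnv1

variable {f g : ℝ → ℝ} {c t : ℝ}

theorem le_convEnv1 {u : ℝ → ℝ} (hu : ConvexOn ℝ (Iio 0) u)
    (hle : ∀ s ∈ Iio (0 : ℝ), u s ≤ min (f s) (g s + c)) : (u t : EReal) ≤ convEnv1 f g c t :=
  le_iSup_of_le u <| le_iSup_of_le ⟨hu, hle⟩ le_rfl

theorem convEnv1_le_left (ht : t < 0) : convEnv1 f g c t ≤ f t :=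
  iSup₂_le fun _ hu => EReal.coe_le_coe_iff.2 <| (hu.2 t ht).trans (min_le_left _ _)

theorem monotone_convEnv1 : Monotone fun c => convEnv1 f g c t := fun _ _ hc =>
  iSup₂_le fun u hu => le_convEnv1 hu.1 fun s hs =>
    (hu.2 s hs).trans (min_le_min_left _ (by linarith))

theorem tendsto_convEnv1_of_forall_le (ht : t < 0)
    (h : ∀ ε > 0, ∃ C, ((f t + ε * t : ℝ) : EReal) ≤ convEnv1 f g C t) :
    Tendsto (fun c => convEnv1 f g c t) atTop (𝓝 (f t : EReal)) := by
  refine tendsto_atTop_isLUB monotone_convEnv1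
    ⟨forall_mem_range.2 fun c => convEnv1_le_left ht, fun b hb => ?_⟩
  have hlim : Tendsto (fun ε : ℝ => ((f t + ε * t : ℝ) : EReal)) (𝓝[>] 0) (𝓝 (f t)) := by
    have hcont : Continuous fun ε : ℝ => f t + ε * t := by fun_prop
    exact (continuous_coe_real_ereal.tendsto _).comp
      ((hcont.tendsto' 0 _ (by simp)).mono_left nhdsWithin_le_nhds)
  refine le_of_tendsto hlim ?_
  filter_upwards [self_mem_nhdsWithin] with ε hε
  obtain ⟨C, hC⟩ := h ε hε
  exact hC.trans (hb (mem_range_self C))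

end convEnv1

theorem convEnv1_tendsto_of_slope_general (f g : ℝ → ℝ)
    (hfconv : ConvexOn ℝ (Iio (0:ℝ)) f) (hgconv : ConvexOn ℝ (Iio (0:ℝ)) g)
    (hfmono : MonotoneOn f (Iio (0:ℝ))) (hgmono : MonotoneOn g (Iio (0:ℝ)))
    (hfneg : ∀ t < (0:ℝ), f t < 0)
    (hslope : slopeAtBot g ≤ slopeAtBot f) :
    (∀ ε : ℝ, 0 < ε → ∃ C : ℝ, 0 < C ∧ ∀ t < (0:ℝ),
        ((f t + ε * t : ℝ) : EReal) ≤ convEnv1 f g C t) ∧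
      (∀ t < (0:ℝ),
        Tendsto (fun c : ℝ => convEnv1 f g c t) atTop (𝓝 ((f t : ℝ) : EReal))) := by
  obtain ⟨lf, hlf⟩ := hfconv.exists_tendsto_div_atBot hfmono
  obtain ⟨lg, hlg⟩ := hgconv.exists_tendsto_div_atBot hgmono
  have hle : lg ≤ lf := by
    rwa [slopeAtBot_eq_of_tendsto hlf, slopeAtBot_eq_of_tendsto hlg, EReal.coe_le_coe_iff]
      at hslope
  have hlower : ∀ ε : ℝ, 0 < ε → ∃ C : ℝ, 0 < C ∧ ∀ t < (0:ℝ),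
      ((f t + ε * t : ℝ) : EReal) ≤ convEnv1 f g C t := by
    intro ε hε
    have hεneg : ∀ t < (0:ℝ), ε * t < 0 := fun t ht => mul_neg_of_pos_of_neg hε ht
    obtain ⟨C, hC, hfg⟩ := exists_le_add_of_eventually_le hgmono
      (fun t ht => by linarith [hfneg t ht, hεneg t ht])
      ((eventually_add_mul_lt_of_tendsto_div hlf hlg hle hε).mono fun _ => le_of_lt)
    have hconv : ConvexOn ℝ (Iio 0) fun s => f s + ε * s :=
      hfconv.add ((convexOn_id (convex_Iio 0)).smul hε.le)
    exact ⟨C, hC, fun t _ => le_convEnv1 hconv fun s hs =>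
      le_min (by linarith [hεneg s hs]) (hfg s hs)⟩
  exact ⟨hlower, fun t ht => tendsto_convEnv1_of_forall_le ht fun ε hε =>
    (hlower ε hε).imp fun _ hC => hC.2 t ht⟩

/-- For negative convex increasing functions `f, g` on `ℝ_{<0}`, if
`lim_{t→-∞} f(t)/t ≥ lim_{t→-∞} g(t)/t`, then for every `ε > 0` there is `C > 0` with
`f(t) + εt ≤ P(f, g+C)(t)` for all `t < 0`; consequently `lim_{c→∞} P(f,g+c) = f`
pointwise on `ℝ_{<0}`. -/
theorem convEnv1_tendsto_of_slope (f g : ℝ → ℝ)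
    (hfconv : ConvexOn ℝ (Iio (0:ℝ)) f) (hgconv : ConvexOn ℝ (Iio (0:ℝ)) g)
    (hfmono : MonotoneOn f (Iio (0:ℝ))) (hgmono : MonotoneOn g (Iio (0:ℝ)))
    (hfneg : ∀ t < (0:ℝ), f t < 0) (hgneg : ∀ t < (0:ℝ), g t < 0)
    (hslope : slopeAtBot g ≤ slopeAtBot f) :
    (∀ ε : ℝ, 0 < ε → ∃ C : ℝ, 0 < C ∧ ∀ t < (0:ℝ),
        ((f t + ε * t : ℝ) : EReal) ≤ convEnv1 f g C t) ∧
      (∀ t < (0:ℝ),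
        Tendsto (fun c : ℝ => convEnv1 f g c t) atTop (𝓝 ((f t : ℝ) : EReal))) :=
  convEnv1_tendsto_of_slope_general f g hfconv hgconv hfmono hgmono hfneg hslope

end
end
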